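/- Suppose α is an ordinal with 3 ≤ α ≤ κ and H is an ideal on P_κ(λ) with cof(H) < non_κ(J⁺ → (J⁺, α)²). Then H⁺ →_{κ,κ} (H⁺; α)². -/

import Mathlib

open Cardinal Set

namespace PaperFormal

noncomputable section

/-- The least (small) cardinality of a family `F : Set X` satisfying `P`. -/
def leastCard {X : Type 1} (P : Set X → Prop) : Cardinal.{0} :=
  sInf {c : Cardinal.{0} | ∃ F : Set X, P F ∧ Cardinal.lift.{1} c = #F}

/-- The collection of (codings of) functions from `κ` to `κ`. -/
def funOn (κ : Cardinal.{0}) : Set (Ordinal.{0} → Ordinal.{0}) :=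
  {f | ∀ α < κ.ord, f α < κ.ord}

/-- The unequality number `U_κ`. -/
def uneq (κ : Cardinal.{0}) : Cardinal.{0} :=
  leastCard fun F : Set (Ordinal.{0} → Ordinal.{0}) => F ⊆ funOn κ ∧
    ∀ g ∈ funOn κ, ∃ f ∈ F, {α | α < κ.ord ∧ f α = g α} = ∅

/-- The dominating number `d_κ`. -/
def domNum (κ : Cardinal.{0}) : Cardinal.{0} :=
  leastCard fun F : Set (Ordinal.{0} → Ordinal.{0}) => F ⊆ funOn κ ∧
    ∀ g ∈ funOn κ, ∃ f ∈ F, ∀ α < κ.ord, g α < f α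

/-- The number `d̄_κ`. -/
def domBar (κ : Cardinal.{0}) : Cardinal.{0} :=
  leastCard fun X : Set (Ordinal.{0} → Ordinal.{0}) => X ⊆ funOn κ ∧
    ∀ g ∈ funOn κ, ∃ x ⊆ X, x.Nonempty ∧ #x < Cardinal.lift.{1} κ ∧
      ∀ α < κ.ord, g α < sSup {o | ∃ f ∈ x, f α = o}

/-- The generalized Cantor space `^ρ2`, with points coded as subsets of `Iio ρ.ord`. -/
def cantor (ρ : Cardinal.{0}) : Set (Set Ordinal.{0}) := {x | x ⊆ Iio ρ.ord}

/-- A forcing condition: a pair `(a, t)` with `t ⊆ a ⊆ Iio ρ.ord` and `|a| < ν`. -/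
def IsCond (ν ρ : Cardinal.{0}) (a t : Set Ordinal.{0}) : Prop :=
  a ⊆ Iio ρ.ord ∧ t ⊆ a ∧ #a < Cardinal.lift.{1} ν

/-- The basic open set determined by a condition. -/
def basicOpen (ρ : Cardinal.{0}) (a t : Set Ordinal.{0}) : Set (Set Ordinal.{0}) :=
  {x | x ⊆ Iio ρ.ord ∧ x ∩ a = t}

/-- Dense open subsets of `^ρ2` (for the `<ν`-support topology). -/
def DenseOpen (ν ρ : Cardinal.{0}) (D : Set (Set Ordinal.{0})) : Prop :=
  D ⊆ cantor ρ ∧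
  (∀ x ∈ D, ∃ a t, IsCond ν ρ a t ∧ x ∈ basicOpen ρ a t ∧ basicOpen ρ a t ⊆ D) ∧
  (∀ a t, IsCond ν ρ a t → (basicOpen ρ a t ∩ D).Nonempty)

/-- Members of `M_{ν,ρ}`. -/
def Meager (ν ρ : Cardinal.{0}) (W : Set (Set Ordinal.{0})) : Prop :=
  W ⊆ cantor ρ ∧ ∃ X : Set (Set (Set Ordinal.{0})), X.Nonempty ∧
    #X ≤ Cardinal.lift.{1} ν ∧ (∀ D ∈ X, DenseOpen ν ρ D) ∧ W ∩ ⋂₀ X = ∅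

/-- The covering number for category `cov(M_{ν,ρ})`. -/
def covM (ν ρ : Cardinal.{0}) : Cardinal.{0} :=
  leastCard fun Y : Set (Set (Set Ordinal.{0})) =>
    (∀ W ∈ Y, Meager ν ρ W) ∧ ⋃₀ Y = cantor ρ

/-- A (`κ`-complete) ideal on `κ`. -/
structure IdealK (κ : Cardinal.{0}) where
  mem : Set (Set Ordinal.{0})
  subset_iio : ∀ A ∈ mem, A ⊆ Iio κ.ord
  singleton_mem : ∀ α < κ.ord, {α} ∈ mem
  subset_mem : ∀ A ∈ mem, ∀ B ⊆ A, B ∈ mem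
  sUnion_mem : ∀ X : Set (Set Ordinal.{0}), X ⊆ mem → #X < Cardinal.lift.{1} κ → ⋃₀ X ∈ mem
  ne_top : Iio κ.ord ∉ mem

/-- `J⁺`, the sets (⊆ κ) not in the ideal. -/
def IdealK.plus {κ : Cardinal.{0}} (J : IdealK κ) : Set (Set Ordinal.{0}) :=
  {A | A ⊆ Iio κ.ord ∧ A ∉ J.mem}

/-- `cof(J)`. -/
def IdealK.cof {κ : Cardinal.{0}} (J : IdealK κ) : Cardinal.{0} :=
  leastCard fun X : Set (Set Ordinal.{0}) =>
    X ⊆ J.mem ∧ ∀ A, A ∈ J.mem ↔ ∃ B ∈ X, A ⊆ B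

/-- `cof̄(J)`. -/
def IdealK.cofBar {κ : Cardinal.{0}} (J : IdealK κ) : Cardinal.{0} :=
  leastCard fun X : Set (Set Ordinal.{0}) =>
    X ⊆ J.mem ∧ ∀ A ∈ J.mem, ∃ x ⊆ X, #x < Cardinal.lift.{1} κ ∧ A ⊆ ⋃₀ x

/-- `non_κ(P)`. -/
def nonK (κ : Cardinal.{0}) (P : IdealK κ → Prop) : Cardinal.{0} :=
  sInf {c | ∃ J : IdealK κ, J.cof = c ∧ ¬ P J}

/-- `non̄_κ(P)`. -/
def nonBarK (κ : Cardinal.{0}) (P : IdealK κ → Prop) : Cardinal.{0} :=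
  sInf {c | ∃ J : IdealK κ, J.cofBar = c ∧ ¬ P J}

/-- Weak `P`-point. -/
def WeakPPoint {κ : Cardinal.{0}} (J : IdealK κ) : Prop :=
  ∀ A ∈ J.plus, ∀ f : Ordinal.{0} → Ordinal.{0},
    (∀ α ∈ A, f α < κ.ord) → (∀ β, {α ∈ A | f α = β} ∈ J.mem) →
    ∃ B ∈ J.plus, B ⊆ A ∧ ∀ β, #{α ∈ B | f α = β} < Cardinal.lift.{1} κ

/-- Weak `Q`-point. -/
def WeakQPoint {κ : Cardinal.{0}} (J : IdealK κ) : Prop :=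
  ∀ A ∈ J.plus, ∀ g ∈ funOn κ,
    ∃ B ∈ J.plus, B ⊆ A ∧ ∀ α ∈ B, ∀ β ∈ B, α < β → g α < β

/-- Weakly selective ideal. -/
def WeaklySelective {κ : Cardinal.{0}} (J : IdealK κ) : Prop :=
  WeakPPoint J ∧ WeakQPoint J

/-- Weak semi-`Q`-point. -/
def WeakSemiQPoint {κ : Cardinal.{0}} (J : IdealK κ) : Prop :=
  ∀ A ∈ J.plus, ∀ f : Ordinal.{0} → Ordinal.{0},
    (∀ α ∈ A, f α < κ.ord) →
    (∀ β, #{α ∈ A | f α = β} < Cardinal.lift.{1} κ) →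
    ∃ C ∈ J.plus, C ⊆ A ∧ ∀ β < κ.ord, #{α ∈ C | f α = β} ≤ Cardinal.lift.{1} β.card

/-- `P_κ(λ)`, coded as the small subsets of `Iio λ.ord`. -/
def smallSet (κ lam : Cardinal.{0}) : Set (Set Ordinal.{0}) :=
  {a | a ⊆ Iio lam.ord ∧ #a < Cardinal.lift.{1} κ}

/-- The ideal `I_{κ,λ}` of noncofinal subsets of `P_κ(λ)`. -/
def Ikl (κ lam : Cardinal.{0}) : Set (Set (Set Ordinal.{0})) :=
  {A | A ⊆ smallSet κ lam ∧ ∃ a ∈ smallSet κ lam, ∀ b ∈ A, ¬ a ⊆ b}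

/-- A (`κ`-complete fine) ideal on `P_κ(λ)`. -/
structure IdealP (κ lam : Cardinal.{0}) where
  mem : Set (Set (Set Ordinal.{0}))
  subset_pk : ∀ A ∈ mem, A ⊆ smallSet κ lam
  fine : Ikl κ lam ⊆ mem
  subset_mem : ∀ A ∈ mem, ∀ B ⊆ A, B ∈ mem
  sUnion_mem : ∀ X : Set (Set (Set Ordinal.{0})), X ⊆ mem →
    #X < Cardinal.lift.{1} κ → ⋃₀ X ∈ mem
  ne_top : smallSet κ lam ∉ mem

/-- `H⁺` computed from the underlying collection `Hm` of an ideal on `P_κ(λ)`. -/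
def plusOf (κ lam : Cardinal.{0}) (Hm : Set (Set (Set Ordinal.{0}))) :
    Set (Set (Set Ordinal.{0})) :=
  {A | A ⊆ smallSet κ lam ∧ A ∉ Hm}

/-- `H⁺`. -/
def IdealP.plus {κ lam : Cardinal.{0}} (H : IdealP κ lam) : Set (Set (Set Ordinal.{0})) :=
  plusOf κ lam H.mem

/-- `cof(H)`. -/
def IdealP.cof {κ lam : Cardinal.{0}} (H : IdealP κ lam) : Cardinal.{0} :=
  leastCard fun X : Set (Set (Set Ordinal.{0})) =>
    X ⊆ H.mem ∧ ∀ A, A ∈ H.mem ↔ ∃ B ∈ X, A ⊆ B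

/-- `cof̄(H)`. -/
def IdealP.cofBar {κ lam : Cardinal.{0}} (H : IdealP κ lam) : Cardinal.{0} :=
  leastCard fun X : Set (Set (Set Ordinal.{0})) =>
    X ⊆ H.mem ∧ ∀ A ∈ H.mem, ∃ x ⊆ X, #x < Cardinal.lift.{1} κ ∧ A ⊆ ⋃₀ x

/-- `d^κ_{κ,λ}`. -/
def domP (κ lam : Cardinal.{0}) : Cardinal.{0} :=
  leastCard fun F : Set (Ordinal.{0} → Set Ordinal.{0}) =>
    (∀ f ∈ F, ∀ α < κ.ord, f α ∈ smallSet κ lam) ∧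
    ∀ g : Ordinal.{0} → Set Ordinal.{0}, (∀ α < κ.ord, g α ∈ smallSet κ lam) →
      ∃ f ∈ F, ∀ α < κ.ord, g α ⊆ f α

/-- A maximal almost disjoint family of size `≥ κ` for `H` (a member of `M_H^{≥κ}`). -/
def IsMad {κ lam : Cardinal.{0}} (H : IdealP κ lam) (Q : Set (Set (Set Ordinal.{0}))) : Prop :=
  Q ⊆ H.plus ∧ Cardinal.lift.{1} κ ≤ #Q ∧
  (∀ A ∈ Q, ∀ B ∈ Q, A ≠ B → A ∩ B ∈ H.mem) ∧
  ∀ C ∈ H.plus, ∃ A ∈ Q, A ∩ C ∈ H.plus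

/-- The (small) cardinal `c` with `lift c = c'`, used to pull `λ^{<κ} = |P_κ(λ)|` down. -/
def downCard (c : Cardinal.{1}) : Cardinal.{0} :=
  sInf {d : Cardinal.{0} | Cardinal.lift.{1} d = c}

open Classical in
/-- The number `a_H`. -/
def aNum {κ lam : Cardinal.{0}} (H : IdealP κ lam) : Cardinal.{0} :=
  if ∃ Q, IsMad H Q then sInf {c | ∃ Q, IsMad H Q ∧ Cardinal.lift.{1} c = #Q}
  else 2 ^ Order.succ (downCard #(smallSet κ lam))

/-- Weak `π`-point. -/
def WeakPiPoint {κ lam : Cardinal.{0}} (H : IdealP κ lam) : Prop :=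
  ∀ f : Ordinal.{0} → Set (Set Ordinal.{0}), (∀ α < κ.ord, f α ∈ H.mem) →
    ∀ A ∈ H.plus, ∃ B ∈ H.plus, B ⊆ A ∧ ∀ α < κ.ord, B ∩ f α ∈ Ikl κ lam

/-- `∪(a ∩ κ)`. -/
def supK (κ : Cardinal.{0}) (a : Set Ordinal.{0}) : Ordinal.{0} :=
  sSup (a ∩ Iio κ.ord)

/-- The relation `a ≺ b`. -/
def prec (κ : Cardinal.{0}) (a b : Set Ordinal.{0}) : Prop :=
  a ⊆ b ∧ supK κ a < supK κ b

/-- `[A]_κ²`. -/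
def pairsK (κ : Cardinal.{0}) (A : Set (Set Ordinal.{0})) : Set (Ordinal.{0} × Set Ordinal.{0}) :=
  {p | ∃ a ∈ A, ∃ b ∈ A, supK κ a < supK κ b ∧ p = (supK κ a, b)}

/-- `[A]_≺²`. -/
def pairsPrec (κ : Cardinal.{0}) (A : Set (Set Ordinal.{0})) :
    Set (Ordinal.{0} × Set Ordinal.{0}) :=
  {p | ∃ a ∈ A, ∃ b ∈ A, prec κ a b ∧ p = (supK κ a, b)}

/-- `[A]_{κ,κ}²`. -/
def pairsKK (κ : Cardinal.{0}) (A : Set (Set Ordinal.{0})) : Set (Ordinal.{0} × Ordinal.{0}) :=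
  {p | ∃ a ∈ A, ∃ b ∈ A, supK κ a < supK κ b ∧ p = (supK κ a, supK κ b)}

/-- `S` is a set of ordinals of order type `α`. -/
def OrdType (S : Set Ordinal.{0}) (α : Ordinal.{0}) : Prop :=
  ∃ e : Ordinal.{0} → Ordinal.{0},
    (∀ i < α, ∀ j < α, i < j → e i < e j) ∧ e '' Iio α = S

/-- `(B, ≺)` has order type `α`. -/
def OrdTypePrec (κ : Cardinal.{0}) (B : Set (Set Ordinal.{0})) (α : Ordinal.{0}) : Prop :=
  ∃ e : Ordinal.{0} → Set Ordinal.{0},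
    (∀ i < α, ∀ j < α, i < j → prec κ (e i) (e j)) ∧ e '' Iio α = B

/-- The partition relation `κ → (κ, θ)²`. -/
def ArrowKTheta (κ : Cardinal.{0}) (θ : Ordinal.{0}) : Prop :=
  ∀ f : Ordinal.{0} → Ordinal.{0} → Fin 2, ∃ A ⊆ Iio κ.ord,
    (OrdType A κ.ord ∧ ∀ α ∈ A, ∀ β ∈ A, α < β → f α β = 0) ∨
    (OrdType A θ ∧ ∀ α ∈ A, ∀ β ∈ A, α < β → f α β = 1)

/-- `κ` is weakly compact. -/
def WeaklyCompact (κ : Cardinal.{0}) : Prop :=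
  ∀ f : Ordinal.{0} → Ordinal.{0} → Fin 2, ∃ A ⊆ Iio κ.ord,
    OrdType A κ.ord ∧ ∃ i, ∀ α ∈ A, ∀ β ∈ A, α < β → f α β = i

/-- The partition relation `J⁺ → (J⁺, α)²` for an ideal on `κ`. -/
def ArrowJ {κ : Cardinal.{0}} (J : IdealK κ) (α : Ordinal.{0}) : Prop :=
  ∀ A ∈ J.plus, ∀ f : Ordinal.{0} → Ordinal.{0} → Fin 2,
    ∃ B ⊆ A, (B ∈ J.plus ∧ ∀ β ∈ B, ∀ γ ∈ B, β < γ → f β γ = 0) ∨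
             (OrdType B α ∧ ∀ β ∈ B, ∀ γ ∈ B, β < γ → f β γ = 1)

/-- The square bracket relation `J⁺ → [J⁺]_ρ²` for an ideal on `κ`. -/
def SqBrJ {κ : Cardinal.{0}} (J : IdealK κ) (ρ : Cardinal.{0}) : Prop :=
  ∀ A ∈ J.plus, ∀ f : Ordinal.{0} → Ordinal.{0} → Ordinal.{0},
    (∀ β ∈ A, ∀ γ ∈ A, β < γ → f β γ < ρ.ord) →
    ∃ B ∈ J.plus, B ⊆ A ∧ {ξ | ∃ β ∈ B, ∃ γ ∈ B, β < γ ∧ f β γ = ξ} ≠ Iio ρ.ord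

/-- `H⁺ →_κ (H⁺, α)²`. -/
def ArrowP (κ lam : Cardinal.{0}) (Hm : Set (Set (Set Ordinal.{0}))) (α : Ordinal.{0}) : Prop :=
  ∀ F : Ordinal.{0} → Set Ordinal.{0} → Fin 2, ∀ A ∈ plusOf κ lam Hm,
    ∃ B ⊆ A, (B ∈ plusOf κ lam Hm ∧ ∀ p ∈ pairsK κ B, F p.1 p.2 = 0) ∨
             (OrdTypePrec κ B α ∧ ∀ p ∈ pairsK κ B, F p.1 p.2 = 1)

/-- `H⁺ →_{κ,κ} (H⁺, α)²`. -/
def ArrowPKK (κ lam : Cardinal.{0}) (Hm : Set (Set (Set Ordinal.{0}))) (α : Ordinal.{0}) : Prop :=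
  ∀ F : Ordinal.{0} → Ordinal.{0} → Fin 2, ∀ A ∈ plusOf κ lam Hm,
    ∃ B ⊆ A, (B ∈ plusOf κ lam Hm ∧ ∀ p ∈ pairsKK κ B, F p.1 p.2 = 0) ∨
             (OrdTypePrec κ B α ∧ ∀ p ∈ pairsKK κ B, F p.1 p.2 = 1)

/-- `H⁺ →_{κ,κ} (H⁺; α)²`. -/
def ArrowPKKsemi (κ lam : Cardinal.{0}) (Hm : Set (Set (Set Ordinal.{0}))) (α : Ordinal.{0}) :
    Prop :=
  ∀ F : Ordinal.{0} → Ordinal.{0} → Fin 2, ∀ A ∈ plusOf κ lam Hm,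
    ∃ B ⊆ A, (B ∈ plusOf κ lam Hm ∧ ∀ p ∈ pairsKK κ B, F p.1 p.2 = 0) ∨
             (OrdType {o | ∃ a ∈ B, supK κ a = o} α ∧ ∀ p ∈ pairsKK κ B, F p.1 p.2 = 1)

/-- `H⁺ →_κ (H⁺)²`. -/
def ArrowPConst (κ lam : Cardinal.{0}) (Hm : Set (Set (Set Ordinal.{0}))) : Prop :=
  ∀ F : Ordinal.{0} → Set Ordinal.{0} → Fin 2, ∀ A ∈ plusOf κ lam Hm,
    ∃ B ∈ plusOf κ lam Hm, B ⊆ A ∧ ∃ i, ∀ p ∈ pairsK κ B, F p.1 p.2 = i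

/-- `H⁺ →_{κ,κ} [H⁺]_ρ²`. -/
def SqBrPKK (κ lam : Cardinal.{0}) (Hm : Set (Set (Set Ordinal.{0}))) (ρ : Cardinal.{0}) : Prop :=
  ∀ F : Ordinal.{0} → Ordinal.{0} → Ordinal.{0},
    (∀ α β : Ordinal.{0}, α < β → β < κ.ord → F α β < ρ.ord) →
    ∀ A ∈ plusOf κ lam Hm, ∃ B ∈ plusOf κ lam Hm, B ⊆ A ∧
      {ξ | ∃ p ∈ pairsKK κ B, F p.1 p.2 = ξ} ≠ Iio ρ.ord

/-- The class `K(κ,λ)`. -/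
def Kset (κ lam : Cardinal.{0}) : Set Cardinal.{0} :=
  {σ | lam ≤ σ ∧ ∃ T ⊆ smallSet κ lam, Cardinal.lift.{1} σ = #T ∧
    ∀ a ∈ smallSet κ lam, #{t ∈ T | t ⊆ a} < Cardinal.lift.{1} κ}

end

end PaperFormal

/-! Given `A ∈ H⁺`, pushing `H` restricted to `A` forward along `a ↦ ∪(a ∩ κ)` gives an ideal `J`
on `κ`: the map lands below `κ` by regularity, and its fibres are noncofinal, so fineness of `H`
puts the singletons into `J`. A cofinal family for `H` projects to one for `J`, so
`cof(J) ≤ cof(H) < non_κ(J⁺ → (J⁺, α)²)` and `J⁺ → (J⁺, α)²` holds. Applying it to the image of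
`A` and pulling the homogeneous set back to `A` yields the required `B`. -/

namespace PaperFormal

theorem leastCard_le_of_mk_le {X : Type 1} {P : Set X → Prop} {F : Set X} {c : Cardinal.{0}}
    (hF : P F) (hc : #F ≤ Cardinal.lift.{1} c) : leastCard P ≤ c := by
  obtain ⟨d, hd⟩ := Cardinal.mem_range_lift_of_le hc
  exact (csInf_le' (s := {c : Cardinal.{0} | ∃ F : Set X, P F ∧ Cardinal.lift.{1} c = #F})
    ⟨F, hF, hd⟩).trans (Cardinal.lift_le.1 (hd ▸ hc))

theorem exists_lift_leastCard_eq_mk {X : Type 1} {P : Set X → Prop} {F : Set X}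
    {c : Cardinal.{0}} (hF : P F) (hc : #F ≤ Cardinal.lift.{1} c) :
    ∃ G, P G ∧ Cardinal.lift.{1} (leastCard P) = #G := by
  obtain ⟨d, hd⟩ := Cardinal.mem_range_lift_of_le hc
  exact csInf_mem (s := {c : Cardinal.{0} | ∃ F : Set X, P F ∧ Cardinal.lift.{1} c = #F})
    ⟨d, F, hF, hd⟩

theorem of_cof_lt_nonK {κ : Cardinal.{0}} {P : IdealK κ → Prop} {J : IdealK κ}
    (h : J.cof < nonK κ P) : P J := by
  by_contra hJ
  exact (csInf_le' (s := {c | ∃ J : IdealK κ, J.cof = c ∧ ¬ P J}) ⟨J, rfl, hJ⟩).not_gt h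

theorem supK_lt_ord {κ : Cardinal.{0}} (hκ : κ.IsRegular) {a : Set Ordinal.{0}}
    (ha : #a < Cardinal.lift.{1} κ) : supK κ a < κ.ord := by
  refine Ordinal.sSup_lt_of_lt_cof ?_ fun _ h => h.2
  rw [← Ordinal.lift_cof, hκ.cof_ord]
  exact (Cardinal.mk_le_mk_of_subset inter_subset_left).trans_lt ha

theorem image_supK_subset_Iio {κ lam : Cardinal.{0}} (hκ : κ.IsRegular)
    {A : Set (Set Ordinal.{0})} (hA : A ⊆ smallSet κ lam) : supK κ '' A ⊆ Iio κ.ord := by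
  rintro _ ⟨a, ha, rfl⟩
  exact supK_lt_ord hκ (hA ha).2

/-- No `a` with `supK κ a = β` contains `β + 1`. -/
theorem inter_preimage_supK_singleton_mem_Ikl {κ lam : Cardinal.{0}} (hκ : ℵ₀ ≤ κ)
    (hle : κ ≤ lam) {A : Set (Set Ordinal.{0})} (hA : A ⊆ smallSet κ lam) {β : Ordinal.{0}}
    (hβ : β < κ.ord) : A ∩ supK κ ⁻¹' {β} ∈ Ikl κ lam := by
  have hβ1 : β + 1 < κ.ord := (Cardinal.isSuccLimit_ord hκ).add_one_lt hβ
  refine ⟨inter_subset_left.trans hA, {β + 1}, ⟨?_, ?_⟩, ?_⟩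
  · rw [singleton_subset_iff]
    exact hβ1.trans_le (Cardinal.ord_le_ord.2 hle)
  · rw [Cardinal.mk_singleton]
    exact Cardinal.one_lt_aleph0.trans_le (Cardinal.aleph0_le_lift.2 hκ)
  · rintro b ⟨-, hb⟩ hβb
    have : β + 1 ≤ supK κ b :=
      le_csSup (bddAbove_Iio.mono inter_subset_right) ⟨hβb rfl, hβ1⟩
    exact (Order.lt_add_one_iff.2 le_rfl).not_ge (hb ▸ this)

theorem eq_on_pairsKK_inter_preimage {κ : Cardinal.{0}} {A : Set (Set Ordinal.{0})}
    {S : Set Ordinal.{0}} {ι : Type*} {f : Ordinal.{0} → Ordinal.{0} → ι} {i : ι}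
    (h : ∀ β ∈ S, ∀ γ ∈ S, β < γ → f β γ = i) :
    ∀ p ∈ pairsKK κ (A ∩ supK κ ⁻¹' S), f p.1 p.2 = i := by
  rintro _ ⟨a, ⟨-, ha⟩, b, ⟨-, hb⟩, hab, rfl⟩
  exact h _ ha _ hb hab

namespace IdealP

variable {κ lam : Cardinal.{0}}

def projection (H : IdealP κ lam) (hκ : κ.IsRegular) (hle : κ ≤ lam) {A : Set (Set Ordinal.{0})}
    (hA : A ∈ H.plus) : IdealK κ where
  mem := {S | S ⊆ Iio κ.ord ∧ A ∩ supK κ ⁻¹' S ∈ H.mem}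
  subset_iio _ hS := hS.1
  singleton_mem β hβ := ⟨singleton_subset_iff.2 hβ,
    H.fine (inter_preimage_supK_singleton_mem_Ikl hκ.aleph0_le hle hA.1 hβ)⟩
  subset_mem S hS T hTS :=
    ⟨hTS.trans hS.1, H.subset_mem _ hS.2 _ (inter_subset_inter_right _ (preimage_mono hTS))⟩
  sUnion_mem X hX hXκ := by
    refine ⟨sUnion_subset fun S hS => (hX hS).1, ?_⟩
    rw [preimage_sUnion, inter_iUnion₂, ← sUnion_image]
    refine H.sUnion_mem _ ?_ (Cardinal.mk_image_le.trans_lt hXκ)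
    rintro _ ⟨S, hS, rfl⟩
    exact (hX hS).2
  ne_top h := hA.2 <| H.subset_mem _ h.2 A fun a ha => ⟨ha, supK_lt_ord hκ (hA.1 ha).2⟩

theorem mk_mem_le (H : IdealP κ lam) :
    #H.mem ≤ Cardinal.lift.{1} ((2 : Cardinal.{0}) ^ (2 : Cardinal.{0}) ^ lam) :=
  calc #H.mem ≤ #(𝒫 𝒫 Iio lam.ord) :=
        Cardinal.mk_le_mk_of_subset fun B hB _ ha => (H.subset_pk B hB ha).1
    _ = Cardinal.lift.{1} ((2 : Cardinal.{0}) ^ (2 : Cardinal.{0}) ^ lam) := by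
        rw [Cardinal.mk_powerset, Cardinal.mk_powerset, Cardinal.mk_Iio_ordinal, Cardinal.card_ord,
          Cardinal.lift_two_power, Cardinal.lift_two_power]

variable (H : IdealP κ lam) (hκ : κ.IsRegular) (hle : κ ≤ lam) {A : Set (Set Ordinal.{0})}
  (hA : A ∈ H.plus)

theorem image_supK_mem_projection_plus : supK κ '' A ∈ (H.projection hκ hle hA).plus :=
  ⟨image_supK_subset_Iio hκ hA.1,
    fun h => hA.2 <| H.subset_mem _ h.2 A fun _ ha => ⟨ha, mem_image_of_mem _ ha⟩⟩

theorem inter_preimage_supK_mem_plus {S : Set Ordinal.{0}}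
    (hS : S ∈ (H.projection hκ hle hA).plus) : A ∩ supK κ ⁻¹' S ∈ H.plus :=
  ⟨inter_subset_left.trans hA.1, fun h => hS.2 ⟨hS.1, h⟩⟩

theorem projection_cof_le : (H.projection hκ hle hA).cof ≤ H.cof := by
  obtain ⟨X, ⟨hXH, hX⟩, hXcard⟩ := exists_lift_leastCard_eq_mk
    (P := fun X => X ⊆ H.mem ∧ ∀ B, B ∈ H.mem ↔ ∃ C ∈ X, B ⊆ C) (F := H.mem)
    ⟨subset_rfl, fun B => ⟨fun hB => ⟨B, hB, subset_rfl⟩,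
      fun ⟨C, hC, hBC⟩ => H.subset_mem C hC B hBC⟩⟩ H.mk_mem_le
  set J := H.projection hκ hle hA
  -- `C ∈ X` projects to the largest `S` with `A ∩ supK κ ⁻¹' S ⊆ C`
  let proj : Set (Set Ordinal.{0}) → Set Ordinal.{0} :=
    fun C => {β | β < κ.ord ∧ A ∩ supK κ ⁻¹' {β} ⊆ C}
  have hprojJ : ∀ C ∈ X, proj C ∈ J.mem := fun C hC =>
    ⟨fun _ hβ => hβ.1, H.subset_mem C (hXH hC) _ fun a ⟨haA, hβ⟩ => hβ.2 ⟨haA, rfl⟩⟩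
  refine leastCard_le_of_mk_le (F := proj '' X)
    ⟨image_subset_iff.2 hprojJ, fun S => ⟨fun hS => ?_, ?_⟩⟩ (hXcard ▸ Cardinal.mk_image_le)
  · obtain ⟨C, hC, hSC⟩ := (hX _).1 hS.2
    exact ⟨proj C, mem_image_of_mem proj hC, fun β hβ =>
      ⟨hS.1 hβ, fun a ⟨haA, ha⟩ => hSC ⟨haA, show supK κ a ∈ S from ha ▸ hβ⟩⟩⟩
  · rintro ⟨_, ⟨C, hC, rfl⟩, hSC⟩
    exact J.subset_mem _ (hprojJ C hC) S hSC

end IdealP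

theorem arrowPKKsemi_of_cof_lt_non_general (κ lam : Cardinal.{0}) (hreg : κ.IsRegular)
    (hlt : κ < lam) (α : Ordinal.{0})
    (H : IdealP κ lam) (hcof : H.cof < nonK κ (fun J => ArrowJ J α)) :
    ArrowPKKsemi κ lam H.mem α := by
  intro F A hA
  have hJ : ArrowJ (H.projection hreg hlt.le hA) α :=
    of_cof_lt_nonK ((H.projection_cof_le hreg hlt.le hA).trans_lt hcof)
  obtain ⟨S, hSA, hS⟩ := hJ _ (H.image_supK_mem_projection_plus hreg hlt.le hA) F
  refine ⟨A ∩ supK κ ⁻¹' S, inter_subset_left, hS.imp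
    (fun ⟨hSJ, h0⟩ => ⟨H.inter_preimage_supK_mem_plus hreg hlt.le hA hSJ,
      eq_on_pairsKK_inter_preimage h0⟩)
    fun ⟨hSα, h1⟩ => ⟨?_, eq_on_pairsKK_inter_preimage h1⟩⟩
  show OrdType (supK κ '' (A ∩ supK κ ⁻¹' S)) α
  rwa [image_inter_preimage, inter_eq_right.2 hSA]

/-- Suppose `3 ≤ α ≤ κ` and `H` is an ideal on `P_κ(λ)` with
`cof(H) < non_κ(J⁺ → (J⁺, α)²)`. Then `H⁺ →_{κ,κ} (H⁺; α)²`. -/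
theorem arrowPKKsemi_of_cof_lt_non (κ lam : Cardinal.{0}) (hreg : κ.IsRegular) (huc : ℵ₀ < κ)
    (hlt : κ < lam) (α : Ordinal.{0}) (hα3 : 3 ≤ α) (hακ : α ≤ κ.ord)
    (H : IdealP κ lam) (hcof : H.cof < nonK κ (fun J => ArrowJ J α)) :
    ArrowPKKsemi κ lam H.mem α :=
  arrowPKKsemi_of_cof_lt_non_general κ lam hreg hlt α H hcof

end PaperFormal
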